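/- Let F be a sensori-computational device and N ⊆ Y(F) such that every nonempty string s1 s2 … sk ∈ L(F) has first symbol s1 ∈ Y(F) \ N. Then F is P_N-simulatable if and only if F is π_N-simulatable, where both relations are taken over the alphabet Y(F). -/

import Mathlib

/-- A sensori-computational device: a finite nonempty set of states `V`,
a nonempty set `V0` of initial states, observations `Y`, a transition
labelling `tr`, and an output function `out` with nonempty values. -/
structure SCD (Y : Type) (C : Type) : Type 1 where
  V : Type
  finV : Fintype V
  V0 : Set V
  V0_nonempty : V0.Nonempty
  tr : V → V → Set Y
  out : V → Set C
  out_nonempty : ∀ v, (out v).Nonempty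

namespace SCD

variable {Y C : Type}

/-- `Traces F v s w`: string `s` reaches state `w` when traced from `v`. -/
inductive Traces (F : SCD Y C) : F.V → List Y → F.V → Prop
  | nil (v : F.V) : Traces F v [] v
  | cons {v w u : F.V} {y : Y} {s : List Y} :
      y ∈ F.tr v w → Traces F w s u → Traces F v (y :: s) u

/-- The set of states reached by `s` from some initial state. -/
def reached (F : SCD Y C) (s : List Y) : Set F.V :=
  {w | ∃ v0 ∈ F.V0, F.Traces v0 s w}

/-- The (interaction) language of `F`. -/
def lang (F : SCD Y C) : Set (List Y) :=
  {s | (F.reached s).Nonempty}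

/-- The set of outputs of all states reached by `s`. -/
def outs (F : SCD Y C) (s : List Y) : Set C :=
  ⋃ v ∈ F.reached s, F.out v

end SCD

/-- `F'` output simulates `F` modulo the relation `R`. -/
def OutSim {A B C : Type} (F : SCD A C) (F' : SCD B C)
    (R : List A → List B → Prop) : Prop :=
  ∀ s ∈ F.lang,
    (∃ t, R s t) ∧ ∀ t, R s t → t ∈ F'.lang ∧ F'.outs t ⊆ F.outs s

/-- `F` is `R`-simulatable: some device output simulates `F` modulo `R`. -/
def Simulatable {A B C : Type} (F : SCD A C)
    (R : List A → List B → Prop) : Prop :=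
  ∃ F' : SCD B C, OutSim F F' R

/-- Composition of relations (on strings), `R ⨟ S`. -/
def relComp {α β γ : Type*} (R : α → β → Prop) (S : β → γ → Prop) :
    α → γ → Prop :=
  fun a c => ∃ b, R a b ∧ S b c
/-- The `N`-pump: the smallest relation with `ε P ε`, `s P s`, and closed
under inserting a symbol `b ∈ N` at any position except before the first
symbol. -/
inductive Pump {A : Type} (N : Set A) : List A → List A → Prop
  | refl (s : List A) : Pump N s s
  | insert {s t1 t2 : List A} {b : A} :
      b ∈ N → Pump N s (t1 ++ t2) → t1 ≠ [] → Pump N s (t1 ++ b :: t2)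

open Classical in
/-- The `N`-shrink: delete all occurrences of symbols in `N`. -/
noncomputable def shrink {A : Type} (N : Set A) : List A → List A
  | [] => []
  | a :: s => if a ∈ N then shrink N s else a :: shrink N s

/-- The `N`-shrink, as a relation (graph of the function). -/
def shrinkRel {A : Type} (N : Set A) : List A → List A → Prop :=
  fun s t => t = shrink N s

/-!
Shrinking to pumping: if `F'` simulates `F` modulo `π_N`, let `F'` ignore the symbols of `N` by
turning them into self-loops; since pumping does not change the shrink, this simulates `F`
modulo `P_N`.

Pumping to shrinking: let `F'` simulate `F` modulo `P_N`. The maps `Set V' → Set V'` induced by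
the words over `N` form a finite monoid, and the product `z` of all its elements lies in the
two-sided ideal generated by each of them: for every word `w` over `N` there are words `p`, `q`
over `N` such that `p w q` acts like `z`. Let `F''` read each symbol `y` as `y z` in `F'`. Since
every string of `L(F)` starts outside `N`, it has the form `y₁ w₁ … yₖ wₖ` with `wᵢ` over `N`;
it pumps to `y₁ p₁ w₁ q₁ … yₖ pₖ wₖ qₖ`, which acts in `F'` like `y₁ z … yₖ z`, that is, like its
shrink `y₁ … yₖ` in `F''`.
-/

theorem Submonoid.exists_forall_mul_mul_eq {M : Type*} [Monoid M] (S : Submonoid M)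
    (hS : (S : Set M).Finite) : ∃ z ∈ S, ∀ x ∈ S, ∃ a ∈ S, ∃ b ∈ S, a * x * b = z := by
  suffices ∀ T ⊆ (S : Set M), T.Finite → ∃ z ∈ S, ∀ x ∈ T, ∃ a ∈ S, ∃ b ∈ S, a * x * b = z from
    this S le_rfl hS
  intro T hTS hT
  induction T, hT using Set.Finite.induction_on with
  | empty => exact ⟨1, S.one_mem, by simp⟩
  | @insert x₀ T _ _ ih =>
    obtain ⟨z, hzS, hz⟩ := ih ((Set.subset_insert _ _).trans hTS)
    have hx₀ : x₀ ∈ S := hTS (Set.mem_insert _ _)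
    refine ⟨x₀ * z, S.mul_mem hx₀ hzS, ?_⟩
    rintro x (rfl | hx)
    · exact ⟨1, S.one_mem, z, hzS, by rw [one_mul]⟩
    · obtain ⟨a, ha, b, hb, rfl⟩ := hz x hx
      exact ⟨x₀ * a, S.mul_mem hx₀ ha, b, hb, by simp only [mul_assoc]⟩

section Shrink

variable {A : Type} {N : Set A}

@[simp]
theorem shrink_nil : shrink N [] = [] := rfl

theorem shrink_cons_of_mem {a : A} (h : a ∈ N) (s : List A) :
    shrink N (a :: s) = shrink N s := by
  simp [shrink, h]

theorem shrink_cons_of_not_mem {a : A} (h : a ∉ N) (s : List A) :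
    shrink N (a :: s) = a :: shrink N s := by
  simp [shrink, h]

theorem shrink_append (s t : List A) : shrink N (s ++ t) = shrink N s ++ shrink N t := by
  induction s with
  | nil => rfl
  | cons a s ih =>
    by_cases h : a ∈ N
    · simp only [List.cons_append, shrink_cons_of_mem h, ih]
    · simp only [List.cons_append, shrink_cons_of_not_mem h, ih]

theorem shrink_eq_nil {s : List A} (h : ∀ a ∈ s, a ∈ N) : shrink N s = [] := by
  induction s with
  | nil => rfl
  | cons a s ih =>
    simp only [List.mem_cons, forall_eq_or_imp] at h
    rw [shrink_cons_of_mem h.1, ih h.2]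

theorem shrink_cons_append {y : A} (hy : y ∉ N) {w : List A} (hw : ∀ a ∈ w, a ∈ N)
    (s : List A) : shrink N (y :: (w ++ s)) = y :: shrink N s := by
  rw [shrink_cons_of_not_mem hy, shrink_append, shrink_eq_nil hw, List.nil_append]

end Shrink

namespace Pump

variable {A : Type} {N : Set A}

theorem trans {s t r : List A} (h₁ : Pump N s t) (h₂ : Pump N t r) : Pump N s r := by
  induction h₂ with
  | refl => exact h₁
  | insert hb _ hne ih => exact .insert hb ih hne

theorem shrink_eq {s t : List A} (h : Pump N s t) : shrink N t = shrink N s := by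
  induction h with
  | refl => rfl
  | insert hb _ _ ih => rw [shrink_append, shrink_cons_of_mem hb, ← shrink_append, ih]

theorem insert_append {s t₁ t₂ X : List A} (h : Pump N s (t₁ ++ t₂)) (ht₁ : t₁ ≠ [])
    (hX : ∀ a ∈ X, a ∈ N) : Pump N s (t₁ ++ (X ++ t₂)) := by
  induction X with
  | nil => simpa using h
  | cons b X ih =>
    simp only [List.mem_cons, forall_eq_or_imp] at hX
    simpa using Pump.insert hX.1 (ih hX.2) ht₁

theorem append_left (x : List A) {s t : List A} (h : Pump N s t) :
    Pump N (x ++ s) (x ++ t) := by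
  induction h with
  | refl => exact .refl _
  | @insert t₁ t₂ b hb _ hne ih =>
    simpa using Pump.insert (t1 := x ++ t₁) hb (by simpa using ih) (by simp [hne])

theorem append_right {s t : List A} (h : Pump N s t) (x : List A) :
    Pump N (s ++ x) (t ++ x) := by
  induction h with
  | refl => exact .refl _
  | @insert t₁ t₂ b hb _ hne ih =>
    simpa using Pump.insert (t2 := t₂ ++ x) hb (by simpa using ih) hne

theorem append {s t s' t' : List A} (h : Pump N s t) (h' : Pump N s' t') :
    Pump N (s ++ s') (t ++ t') :=
  (h.append_right s').trans (h'.append_left t)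

theorem cons_append_append (y : A) {w p q : List A} (hp : ∀ a ∈ p, a ∈ N)
    (hq : ∀ a ∈ q, a ∈ N) : Pump N (y :: w) (y :: (p ++ w ++ q)) := by
  have hq' : Pump N (y :: w) ((y :: w) ++ (q ++ [])) :=
    Pump.insert_append (t₁ := y :: w) (by simpa using Pump.refl _) (by simp) hq
  have hpq : Pump N (y :: w) ([y] ++ (p ++ (w ++ q))) :=
    Pump.insert_append (t₁ := [y]) (by simpa using hq') (by simp) hp
  simpa using hpq

end Pump

namespace SCD

variable {Y C : Type} (F : SCD Y C)

theorem traces_nil_iff {v w : F.V} : F.Traces v [] w ↔ v = w :=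
  ⟨fun h => by cases h; rfl, fun h => h ▸ .nil v⟩

theorem traces_cons_iff {v w : F.V} {y : Y} {s : List Y} :
    F.Traces v (y :: s) w ↔ ∃ u, y ∈ F.tr v u ∧ F.Traces u s w :=
  ⟨fun h => by cases h with | cons hy hs => exact ⟨_, hy, hs⟩,
    fun ⟨_, hy, hs⟩ => .cons hy hs⟩

theorem traces_append_iff {v w : F.V} {s t : List Y} :
    F.Traces v (s ++ t) w ↔ ∃ u, F.Traces v s u ∧ F.Traces u t w := by
  induction s generalizing v with
  | nil => simp [traces_nil_iff]
  | cons a s ih =>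
    simp only [List.cons_append, traces_cons_iff, ih]
    grind

def transfer (w : List Y) : Function.End (Set F.V) :=
  fun S => {u | ∃ v ∈ S, F.Traces v w u}

theorem reached_eq_transfer (s : List Y) : F.reached s = F.transfer s F.V0 := rfl

theorem transfer_nil : F.transfer [] = 1 := by
  funext S
  ext w
  simp [transfer, traces_nil_iff, Function.End.one_def]

theorem transfer_append (s t : List Y) :
    F.transfer (s ++ t) = F.transfer t * F.transfer s := by
  funext S
  ext w
  simp only [transfer, traces_append_iff, Function.End.mul_def,
    Set.mem_ofPred_eq]
  exact ⟨fun ⟨v, hv, m, h₁, h₂⟩ => ⟨m, ⟨v, hv, h₁⟩, h₂⟩,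
    fun ⟨m, ⟨v, hv, h₁⟩, h₂⟩ => ⟨v, hv, m, h₁, h₂⟩⟩

def transferSubmonoid (N : Set Y) : Submonoid (Function.End (Set F.V)) where
  carrier := {g | ∃ w, (∀ a ∈ w, a ∈ N) ∧ F.transfer w = g}
  one_mem' := ⟨[], by simp, F.transfer_nil⟩
  mul_mem' := by
    rintro _ _ ⟨w₁, hw₁, rfl⟩ ⟨w₂, hw₂, rfl⟩
    refine ⟨w₂ ++ w₁, ?_, F.transfer_append w₂ w₁⟩
    simpa [or_imp, forall_and] using ⟨hw₂, hw₁⟩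

theorem exists_transfer_append_append_eq (N : Set Y) :
    ∃ z : List Y, ∀ w, (∀ a ∈ w, a ∈ N) → ∃ p q, (∀ a ∈ p, a ∈ N) ∧ (∀ a ∈ q, a ∈ N) ∧
      F.transfer (p ++ w ++ q) = F.transfer z := by
  have : Fintype F.V := F.finV
  have : Finite (Function.End (Set F.V)) := inferInstanceAs (Finite (Set F.V → Set F.V))
  obtain ⟨_, ⟨z, -, rfl⟩, hz⟩ := (F.transferSubmonoid N).exists_forall_mul_mul_eq (Set.toFinite _)
  refine ⟨z, fun w hw => ?_⟩
  obtain ⟨_, ⟨q, hq, rfl⟩, _, ⟨p, hp, rfl⟩, h⟩ := hz _ ⟨w, hw, rfl⟩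
  exact ⟨p, q, hp, hq, by rw [transfer_append, transfer_append, ← h, mul_assoc]⟩

section Pumping

variable {F} {N : Set Y} {z : List Y}
  (hz : ∀ w, (∀ a ∈ w, a ∈ N) → ∃ p q, (∀ a ∈ p, a ∈ N) ∧ (∀ a ∈ q, a ∈ N) ∧
    F.transfer (p ++ w ++ q) = F.transfer z)
include hz

theorem exists_pump_cons (y : Y) {w : List Y} (hw : ∀ a ∈ w, a ∈ N) :
    ∃ t, Pump N (y :: w) t ∧ F.transfer t = F.transfer (y :: z) := by
  obtain ⟨p, q, hp, hq, hpq⟩ := hz w hw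
  refine ⟨y :: (p ++ w ++ q), Pump.cons_append_append y hp hq, ?_⟩
  rw [← List.singleton_append, transfer_append, hpq, ← transfer_append, List.singleton_append]

theorem exists_pump_cons_append (s : List Y) {y : Y} (hy : y ∉ N) {w : List Y}
    (hw : ∀ a ∈ w, a ∈ N) : ∃ t, Pump N (y :: (w ++ s)) t ∧
      F.transfer t = F.transfer ((y :: shrink N s).flatMap (· :: z)) := by
  induction s generalizing y w with
  | nil => simpa using exists_pump_cons hz y hw
  | cons a s ih =>
    by_cases ha : a ∈ N
    · have hwa : ∀ b ∈ w ++ [a], b ∈ N := by simpa [or_imp, forall_and, ha] using hw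
      simpa [shrink_cons_of_mem ha] using ih hy hwa
    · obtain ⟨t₁, hst₁, ht₁⟩ := exists_pump_cons hz y hw
      obtain ⟨t₂, hst₂, ht₂⟩ := ih ha (w := []) (by simp)
      refine ⟨t₁ ++ t₂, by simpa using hst₁.append hst₂, ?_⟩
      rw [transfer_append, ht₁, ht₂, ← transfer_append, shrink_cons_of_not_mem ha]
      rfl

theorem exists_pump_transfer_eq {s : List Y} (hs : ∀ a, s.head? = some a → a ∉ N) :
    ∃ t, Pump N s t ∧ F.transfer t = F.transfer ((shrink N s).flatMap (· :: z)) := by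
  cases s with
  | nil => exact ⟨[], .refl _, rfl⟩
  | cons y s =>
    have hy : y ∉ N := hs y rfl
    simpa [shrink_cons_of_not_mem hy] using exists_pump_cons_append hz s hy (w := []) (by simp)

end Pumping

abbrev withTr (tr : F.V → F.V → Set Y) : SCD Y C := { F with tr := tr }

theorem reached_withTr_eq {tr : F.V → F.V → Set Y} {u u' : List Y}
    (h : ∀ v w, (F.withTr tr).Traces v u w ↔ F.Traces v u' w) :
    (F.withTr tr).reached u = F.reached u' :=
  Set.ext fun w => exists_congr fun v => and_congr_right fun _ => h v w

abbrev addLoops (N : Set Y) : SCD Y C :=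
  F.withTr fun v w => (F.tr v w \ N) ∪ {y | y ∈ N ∧ v = w}

theorem addLoops_traces_iff (N : Set Y) (t : List Y) {v w : F.V} :
    (F.addLoops N).Traces v t w ↔ F.Traces v (shrink N t) w := by
  induction t generalizing v with
  | nil => exact (traces_nil_iff _).trans (traces_nil_iff _).symm
  | cons a t ih =>
    rw [traces_cons_iff]
    by_cases ha : a ∈ N
    · simp [ha, shrink_cons_of_mem ha, ← ih]
    · simp [ha, shrink_cons_of_not_mem ha, traces_cons_iff F, ← ih]

abbrev interleave (z : List Y) : SCD Y C :=
  F.withTr fun v w => {y | ∃ u, y ∈ F.tr v u ∧ F.Traces u z w}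

theorem interleave_traces_iff (z u : List Y) {v w : F.V} :
    (F.interleave z).Traces v u w ↔ F.Traces v (u.flatMap (· :: z)) w := by
  induction u generalizing v with
  | nil => exact (traces_nil_iff _).trans (traces_nil_iff _).symm
  | cons y u ih =>
    simp only [traces_cons_iff (F.interleave z), List.flatMap_cons, List.cons_append,
      traces_cons_iff F, traces_append_iff, ih]
    grind

end SCD

theorem OutSim.withTr {A B C : Type} {F : SCD A C} {F' : SCD B C}
    {R R' : List A → List B → Prop} (h : OutSim F F' R) (tr : F'.V → F'.V → Set B)
    (htotal : ∀ s ∈ F.lang, ∃ t, R' s t)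
    (hreached : ∀ s ∈ F.lang, ∀ t, R' s t →
      ∃ t', R s t' ∧ (F'.withTr tr).reached t = F'.reached t') :
    OutSim F (F'.withTr tr) R' := by
  intro s hs
  refine ⟨htotal s hs, fun t hst => ?_⟩
  obtain ⟨t', hst', ht'⟩ := hreached s hs t hst
  obtain ⟨hlang, houts⟩ := (h s hs).2 t' hst'
  refine ⟨show ((F'.withTr tr).reached t).Nonempty from ht' ▸ hlang, ?_⟩
  have : (F'.withTr tr).outs t = F'.outs t' := by simp only [SCD.outs, ht']
  exact this ▸ houts

namespace Simulatable

variable {Y C : Type} {F : SCD Y C} {N : Set Y}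

theorem pump_of_shrinkRel (h : Simulatable F (shrinkRel N)) : Simulatable F (Pump N) := by
  obtain ⟨F', hF'⟩ := h
  refine ⟨F'.addLoops N, hF'.withTr _ (fun s _ => ⟨s, .refl s⟩) fun s _ t hst => ⟨_, rfl, ?_⟩⟩
  rw [← hst.shrink_eq]
  exact F'.reached_withTr_eq fun _ _ => F'.addLoops_traces_iff N t

theorem shrinkRel_of_pump (hfirst : ∀ s ∈ F.lang, ∀ a : Y, s.head? = some a → a ∉ N)
    (h : Simulatable F (Pump N)) : Simulatable F (shrinkRel N) := by
  obtain ⟨F', hF'⟩ := h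
  obtain ⟨z, hz⟩ := F'.exists_transfer_append_append_eq N
  refine ⟨F'.interleave z, hF'.withTr _ (fun s _ => ⟨_, rfl⟩) ?_⟩
  rintro s hs _ rfl
  obtain ⟨t, hst, ht⟩ := SCD.exists_pump_transfer_eq hz (hfirst s hs)
  refine ⟨t, hst, ?_⟩
  rw [F'.reached_withTr_eq fun _ _ => F'.interleave_traces_iff z _, SCD.reached_eq_transfer,
    SCD.reached_eq_transfer, ht]

end Simulatable

/-- if every nonempty string of `L(F)` starts with a symbol
outside `N`, then `F` is `P_N`-simulatable iff `F` is `π_N`-simulatable. -/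
theorem stmt13 {Y C : Type} (F : SCD Y C) (N : Set Y)
    (hfirst : ∀ s ∈ F.lang, ∀ a : Y, s.head? = some a → a ∉ N) :
    Simulatable F (Pump N) ↔ Simulatable F (shrinkRel N) :=
  ⟨Simulatable.shrinkRel_of_pump hfirst, Simulatable.pump_of_shrinkRel⟩
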